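/- Given a descent datum (M_f, M̂, ρ), the R-linear map M̂ ⊕ M_f → R̂_f ⊗_{R̂} M̂ sending (m̂, m) to 1 ⊗ m̂ + ρ(1 ⊗ m) is surjective. -/
import Mathlib


open TensorProduct

set_option maxHeartbeats 1000000
set_option synthInstance.maxHeartbeats 400000

noncomputable section

variable (R : Type*) [CommRing R] (f : R)

/-- The `(f)`-adic completion `R̂` of `R`. -/
abbrev Rhat : Type _ := AdicCompletion (Ideal.span {f}) R

/-- The localization `R_f = R[f⁻¹]`. -/
abbrev Rf : Type _ := Localization.Away f

/-- The localization `R̂_f = R̂[ι(f)⁻¹]`. -/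
abbrev Rhatf : Type _ := Localization.Away (algebraMap R (Rhat R f) f)

/-- The canonical map `R_f → R̂_f` extending `ι : R → R̂` (as an `R`-algebra map). -/
noncomputable def psiAlg : Rf R f →ₐ[R] Rhatf R f :=
  Localization.awayMapₐ (Algebra.ofId R (Rhat R f)) f

/-- `R̂_f` is an `R_f`-algebra via the canonical map `R_f → R̂_f`. -/
noncomputable instance : Algebra (Rf R f) (Rhatf R f) :=
  (psiAlg R f).toRingHom.toAlgebra

namespace Stmt6Aux

variable {R}

theorem span_smul_top (f : R) (m : ℕ) :
    ((Ideal.span {f}) ^ m • ⊤ : Ideal R) = Ideal.span {f ^ m} := by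
  rw [smul_eq_mul, Ideal.mul_top, Ideal.span_singleton_pow]

/-- Lemma B: every element of `R̂` is `ι r + f^n d`. -/
theorem decomp (hf : f ∈ nonZeroDivisors R)
    (c : Rhat R f) (n : ℕ) :
    ∃ (r : R) (d : Rhat R f),
      c = algebraMap R _ r + (algebraMap R (Rhat R f) f) ^ n * d := by
  obtain ⟨a, rfl⟩ := AdicCompletion.mk_surjective (Ideal.span {f}) R c
  have key : ∀ m m' : ℕ, m ≤ m' → f ^ m ∣ (a.val m' - a.val m) := by
    intro m m' h
    have h2 := a.property h
    rw [SModEq.sub_mem, span_smul_top, Ideal.mem_span_singleton] at h2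
    have := dvd_neg.mpr h2
    rwa [neg_sub] at this
  choose b hb using fun m => key n (m + n) (Nat.le_add_left n m)
  have hcauchy : AdicCompletion.IsAdicCauchy (Ideal.span {f}) R b := by
    intro m m' h
    rw [SModEq.sub_mem, span_smul_top, Ideal.mem_span_singleton]
    obtain ⟨u, hu⟩ := key (m + n) (m' + n) (by omega)
    have hcan : f ^ n * (b m - b m') = f ^ n * (- (f ^ m * u)) := by
      have e1 := hb m
      have e2 := hb m'
      rw [pow_add] at hu
      linear_combination e2 - e1 - hu
    have : b m - b m' = - (f ^ m * u) :=
      (mul_cancel_left_mem_nonZeroDivisors (pow_mem hf n)).mp hcan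
    rw [this]
    exact dvd_neg.mpr ⟨u, rfl⟩
  refine ⟨a.val n, AdicCompletion.mk _ _ ⟨b, hcauchy⟩, ?_⟩
  ext m
  have hma : (Submodule.Quotient.mk (p := ((Ideal.span {f}) ^ m • ⊤ : Submodule R R)) (a.val m))
      = Submodule.Quotient.mk (a.val (m + n)) := by
    rw [Submodule.Quotient.eq]
    rw [span_smul_top, Ideal.mem_span_singleton]
    have := dvd_neg.mpr (key m (m + n) (by omega))
    rwa [neg_sub] at this
  show Submodule.Quotient.mk (a.val m) = _
  rw [hma]
  show _ = ((algebraMap R (Rhat R f) (a.val n)).val m) +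
    (((algebraMap R (Rhat R f) f) ^ n).val m) *
    ((AdicCompletion.mk _ _ ⟨b, hcauchy⟩).val m)
  show _ = Ideal.Quotient.mk ((Ideal.span {f}) ^ m • ⊤ : Ideal R) (a.val n) +
    (Ideal.Quotient.mk ((Ideal.span {f}) ^ m • ⊤ : Ideal R) f) ^ n *
    Ideal.Quotient.mk ((Ideal.span {f}) ^ m • ⊤ : Ideal R) (b m)
  rw [← map_pow, ← map_mul, ← map_add]
  show Submodule.Quotient.mk _ = Submodule.Quotient.mk _
  congr 1
  linear_combination hb m

/-- Lemma A: clearing denominators in `R̂_f ⊗ M̂`. -/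
theorem clear_denom (f : R) (Mh : Type*) [AddCommGroup Mh] [Module (Rhat R f) Mh]
    (t : Rhatf R f ⊗[Rhat R f] Mh) :
    ∃ (k : ℕ) (ν : Mh),
      (algebraMap (Rhat R f) (Rhatf R f) ((algebraMap R (Rhat R f) f) ^ k)) • t
        = (1 : Rhatf R f) ⊗ₜ[Rhat R f] ν := by
  induction t using TensorProduct.induction_on with
  | zero => exact ⟨0, 0, by simp⟩
  | tmul x ν =>
    obtain ⟨⟨c, s⟩, hcs⟩ :=
      IsLocalization.surj (M := Submonoid.powers (algebraMap R (Rhat R f) f)) x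
    obtain ⟨k, hk⟩ := s.2
    refine ⟨k, c • ν, ?_⟩
    have hk' : (algebraMap R (Rhat R f) f) ^ k = (s : Rhat R f) := hk
    rw [smul_tmul', smul_eq_mul, hk', mul_comm, hcs]
    rw [show (algebraMap (Rhat R f) (Rhatf R f) c) ⊗ₜ[Rhat R f] ν
        = algebraMap (Rhat R f) (Rhatf R f) c • ((1 : Rhatf R f) ⊗ₜ[Rhat R f] ν) by
      rw [smul_tmul', smul_eq_mul, mul_one]]
    rw [algebraMap_smul, tmul_smul]
  | add u v hu hv =>
    obtain ⟨k₁, ν₁, h₁⟩ := hu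
    obtain ⟨k₂, ν₂, h₂⟩ := hv
    refine ⟨k₁ + k₂, (algebraMap R (Rhat R f) f) ^ k₂ • ν₁
      + (algebraMap R (Rhat R f) f) ^ k₁ • ν₂, ?_⟩
    have hadd := smul_add
      (algebraMap (Rhat R f) (Rhatf R f) ((algebraMap R (Rhat R f) f) ^ (k₁ + k₂))) u v
    rw [hadd, pow_add]
    nth_rewrite 1 [mul_comm]
    rw [map_mul (algebraMap (Rhat R f) (Rhatf R f)), mul_smul, h₁,
      map_mul (algebraMap (Rhat R f) (Rhatf R f)), mul_smul, h₂, tmul_add]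
    rw [algebraMap_smul, tmul_smul, algebraMap_smul, tmul_smul]

end Stmt6Aux


namespace Stmt6Aux

theorem halg (s : Rf R f) : algebraMap (Rf R f) (Rhatf R f) s = psiAlg R f s := rfl

theorem hpsi (r : R) : psiAlg R f (algebraMap R (Rf R f) r)
    = algebraMap (Rhat R f) (Rhatf R f) (algebraMap R (Rhat R f) r) := by
  rw [(psiAlg R f).commutes r, IsScalarTower.algebraMap_apply R (Rhat R f) (Rhatf R f)]

theorem hmove (Mf : Type*) [AddCommGroup Mf] [Module (Rf R f) Mf] (s : Rf R f) (μ : Mf) :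
    (algebraMap (Rf R f) (Rhatf R f) s) ⊗ₜ[Rf R f] μ
      = (1 : Rhatf R f) ⊗ₜ[Rf R f] (s • μ) := by
  rw [show (algebraMap (Rf R f) (Rhatf R f) s) ⊗ₜ[Rf R f] μ
      = algebraMap (Rf R f) (Rhatf R f) s • ((1 : Rhatf R f) ⊗ₜ[Rf R f] μ) by
    rw [smul_tmul', smul_eq_mul, mul_one]]
  rw [algebraMap_smul, tmul_smul]

theorem claimC (hf : f ∈ nonZeroDivisors R)
    (Mf : Type*) [AddCommGroup Mf] [Module (Rf R f) Mf]
    (Mh : Type*) [AddCommGroup Mh] [Module (Rhat R f) Mh]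
    (ρ : (Rhatf R f ⊗[Rf R f] Mf) ≃ₗ[Rhatf R f] (Rhatf R f ⊗[Rhat R f] Mh))
    (c : Rhat R f) (μ : Mf) :
    ∃ (mh : Mh) (μ' : Mf),
      (algebraMap (Rhat R f) (Rhatf R f) c) • ρ ((1 : Rhatf R f) ⊗ₜ[Rf R f] μ)
        = ((1 : Rhatf R f) ⊗ₜ[Rhat R f] mh) + ρ ((1 : Rhatf R f) ⊗ₜ[Rf R f] μ') := by
  obtain ⟨k, ν, hk⟩ := Stmt6Aux.clear_denom f Mh (ρ ((1 : Rhatf R f) ⊗ₜ[Rf R f] μ))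
  obtain ⟨r, d, hrd⟩ := Stmt6Aux.decomp (f := f) hf c k
  refine ⟨d • ν, algebraMap R (Rf R f) r • μ, ?_⟩
  rw [hrd, map_add (algebraMap (Rhat R f) (Rhatf R f)),
    map_mul (algebraMap (Rhat R f) (Rhatf R f)), add_smul,
    mul_comm (algebraMap (Rhat R f) (Rhatf R f) ((algebraMap R (Rhat R f) f) ^ k)),
    mul_smul, hk]
  rw [add_comm]
  congr 1
  · rw [algebraMap_smul, tmul_smul]
  · rw [← hpsi R f r, ← halg, ← map_smul ρ, smul_tmul', smul_eq_mul, mul_one, hmove]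

theorem reach (hf : f ∈ nonZeroDivisors R)
    (Mf : Type*) [AddCommGroup Mf] [Module (Rf R f) Mf]
    (Mh : Type*) [AddCommGroup Mh] [Module (Rhat R f) Mh]
    (ρ : (Rhatf R f ⊗[Rf R f] Mf) ≃ₗ[Rhatf R f] (Rhatf R f ⊗[Rhat R f] Mh))
    (u : Rhatf R f ⊗[Rf R f] Mf) :
    ∃ (mh : Mh) (μ : Mf),
      ((1 : Rhatf R f) ⊗ₜ[Rhat R f] mh) + ρ ((1 : Rhatf R f) ⊗ₜ[Rf R f] μ) = ρ u := by
  induction u using TensorProduct.induction_on with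
  | zero =>
    refine ⟨0, 0, ?_⟩
    rw [tmul_zero, tmul_zero, map_zero ρ, add_zero]
  | tmul x μ =>
    obtain ⟨⟨c, s⟩, hcs⟩ :=
      IsLocalization.surj (M := Submonoid.powers (algebraMap R (Rhat R f) f)) x
    obtain ⟨k, hk⟩ := s.2
    have hunit : IsUnit (algebraMap R (Rf R f) (f ^ k)) :=
      IsLocalization.map_units (Rf R f) (⟨f ^ k, k, rfl⟩ : Submonoid.powers f)
    have hk' : (algebraMap R (Rhat R f) f) ^ k = (s : Rhat R f) := hk
    set w : Rf R f := ((hunit.unit⁻¹ : (Rf R f)ˣ) : Rf R f) with hw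
    have hwq : algebraMap R (Rf R f) (f ^ k) * w = 1 := by
      rw [hw]
      exact hunit.mul_val_inv
    have hs : algebraMap (Rhat R f) (Rhatf R f) ((s : Rhat R f))
        = algebraMap (Rf R f) (Rhatf R f) (algebraMap R (Rf R f) (f ^ k)) := by
      rw [← hk', ← map_pow, halg, ← hpsi]
    have hx : x ⊗ₜ[Rf R f] μ
        = (algebraMap (Rhat R f) (Rhatf R f) c)
          • ((1 : Rhatf R f) ⊗ₜ[Rf R f] (w • μ)) := by
      rw [smul_tmul', smul_eq_mul, mul_one, tmul_smul,
        ← algebraMap_smul (Rhatf R f) w, smul_tmul', smul_eq_mul]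
      congr 1
      rw [← hcs, hs, mul_comm x, ← mul_assoc, ← map_mul, mul_comm w, hwq, map_one, one_mul]
    obtain ⟨mh, μ', hC⟩ := claimC R f hf Mf Mh ρ c (w • μ)
    exact ⟨mh, μ', by rw [hx, map_smul ρ, hC]⟩
  | add u v hu hv =>
    obtain ⟨m₁, μ₁, h₁⟩ := hu
    obtain ⟨m₂, μ₂, h₂⟩ := hv
    refine ⟨m₁ + m₂, μ₁ + μ₂, ?_⟩
    rw [tmul_add, tmul_add, map_add ρ, map_add ρ u v, ← h₁, ← h₂]
    exact add_add_add_comm _ _ _ _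

end Stmt6Aux

/-- given a descent datum `(M_f, M̂, ρ)`, the map
`M̂ ⊕ M_f → R̂_f ⊗_{R̂} M̂`, `(m̂, m) ↦ 1 ⊗ m̂ + ρ(1 ⊗ m)`, is surjective. -/
theorem stmt6 [IsNoetherianRing R] (hf : f ∈ nonZeroDivisors R)
    (Mf : Type*) [AddCommGroup Mf] [Module (Rf R f) Mf]
    (Mh : Type*) [AddCommGroup Mh] [Module (Rhat R f) Mh]
    (ρ : (Rhatf R f ⊗[Rf R f] Mf) ≃ₗ[Rhatf R f] (Rhatf R f ⊗[Rhat R f] Mh)) :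
    Function.Surjective
      (fun p : Mh × Mf =>
        ((1 : Rhatf R f) ⊗ₜ[Rhat R f] p.1) + ρ ((1 : Rhatf R f) ⊗ₜ[Rf R f] p.2)) := by
  intro t
  obtain ⟨mh, μ, h⟩ := Stmt6Aux.reach R f hf Mf Mh ρ (ρ.symm t)
  rw [LinearEquiv.apply_symm_apply] at h
  exact ⟨(mh, μ), h⟩
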